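/- Let (L, R) be a Reynolds Lie algebra over a field k and (V; ρ, R_V) a representation of it, and define ρ_R(x)u := ρ(R x)u + R_V(ρ(R x)u − ρ(x)u). Then (V; ρ_R, R_V) is a representation of the Reynolds Lie algebra ((L,[·,·]_R), R), i.e. ρ_R(R x)(R_V u) = R_V(ρ_R(R x)u + ρ_R(x)(R_V u) − ρ_R(R x)(R_V u)) for all x ∈ L, u ∈ V. -/
import Mathlib


namespace ReynoldsInducedRep

variable {k L V : Type*} [Field k] [LieRing L] [LieAlgebra k L]
  [AddCommGroup V] [Module k V]

/-- The induced action `ρ_R(x)u := ρ(R x)u + R_V(ρ(R x)u - ρ(x)u)`. -/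
def rhoR (R : L →ₗ[k] L) (ρ : L →ₗ[k] Module.End k V) (RV : V →ₗ[k] V)
    (x : L) (v : V) : V :=
  ρ (R x) v + RV (ρ (R x) v - ρ x v)

/-- If `(V; ρ, R_V)` is a representation of a Reynolds Lie algebra `(L, R)`, then
`(V; ρ_R, R_V)` is a representation of the Reynolds Lie algebra `((L,[·,·]_R), R)`,
i.e. `R_V` satisfies the Reynolds compatibility condition with respect to `ρ_R`. -/
theorem rhoR_reynolds_rep
    (R : L →ₗ[k] L)
    (hR : ∀ x y : L, ⁅R x, R y⁆ = R (⁅R x, y⁆ + ⁅x, R y⁆ - ⁅R x, R y⁆))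
    (ρ : L →ₗ[k] Module.End k V)
    (hρ : ∀ (x y : L) (v : V), ρ ⁅x, y⁆ v = ρ x (ρ y v) - ρ y (ρ x v))
    (RV : V →ₗ[k] V)
    (hRV : ∀ (x : L) (u : V),
      ρ (R x) (RV u) = RV (ρ (R x) u + ρ x (RV u) - ρ (R x) (RV u))) :
    ∀ (x : L) (u : V),
      rhoR R ρ RV (R x) (RV u)
        = RV (rhoR R ρ RV (R x) u + rhoR R ρ RV x (RV u)
            - rhoR R ρ RV (R x) (RV u)) := by
  intro x u
  have h1 := hRV (R x) u
  have h2 := hRV x u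
  have h1' := congrArg RV h1
  have h2' := congrArg RV h2
  simp only [rhoR, map_add, map_sub] at *
  linear_combination (norm := module) h1 + h1' - h2'

end ReynoldsInducedRep
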